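/- arXiv:2205.00448 — 2 statements merged into one kernel-verified Lean document; each statement's English description precedes it below -/
import Mathlib

section
/- Let F, Λ, ar, ⟦·⟧ be a set functor with a modal signature interpreted by predicate liftings, let 𝔄₀ ⊆ 𝔄₁ be finite Boolean subalgebras of Set X, let f : S(𝔄₁) → S(𝔄₀) be the canonical projection sending each atom U of 𝔄₁ to the unique atom of 𝔄₀ containing U, let φ ∈ Prop(Λ(𝔄₀)), and let t : F.obj (S(𝔄₁)). Then t lies in the extension of φcan_{𝔄₁} if and only if F.map f t lies in the extension of φcan_{𝔄₀}. -/
open CategoryTheory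

universe u v

/-- Propositional formulas over a type `Z` of atoms. -/
inductive PropForm (Z : Type v) : Type v
  | bot : PropForm Z
  | atom : Z → PropForm Z
  | neg : PropForm Z → PropForm Z
  | and : PropForm Z → PropForm Z → PropForm Z

/-- Extension of a propositional formula under a valuation of atoms by subsets of `X`. -/
def PropForm.eval {Z : Type v} {X : Type u} (τ : Z → Set X) : PropForm Z → Set X
  | .bot => ∅
  | .atom z => τ z
  | .neg φ => (PropForm.eval τ φ)ᶜ
  | .and φ ψ => PropForm.eval τ φ ∩ PropForm.eval τ ψ

/-- Substitution of atoms in a propositional formula. -/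
def PropForm.map {Z : Type v} {W : Type _} (f : Z → W) : PropForm Z → PropForm W
  | .bot => .bot
  | .atom z => .atom (f z)
  | .neg φ => .neg (PropForm.map f φ)
  | .and φ ψ => .and (PropForm.map f φ) (PropForm.map f ψ)

/-- A finite modal signature for `F`, interpreted by predicate liftings: a finite type of
modalities with arities, each interpreted by a natural predicate lifting. -/
structure ModalSig (F : Type u ⥤ Type u) where
  Λ : Type
  finite : Finite Λ
  ar : Λ → ℕ
  lift : ∀ (m : Λ) (X : Type u), (Fin (ar m) → Set X) → Set (F.obj X)
  natural : ∀ (m : Λ) (X Y : Type u) (f : X → Y) (A : Fin (ar m) → Set Y),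
    lift m X (fun i => f ⁻¹' A i) = F.map (TypeCat.ofHom f) ⁻¹' lift m Y A

/-- `Prop(Λ(Z))`: propositional combinations of modal atoms `♥(z₁,…,z_{ar ♥})` over `Z`. -/
def OSF {F : Type u ⥤ Type u} (S : ModalSig F) (Z : Type v) : Type v :=
  PropForm ((m : S.Λ) × (Fin (S.ar m) → Z))

/-- Extension of a formula in `Prop(Λ(Z))` in `Set (F.obj X)`, given a valuation
`τ : Z → Set X`. -/
def OSF.ext {F : Type u ⥤ Type u} (S : ModalSig F) {Z : Type v} {X : Type u}
    (τ : Z → Set X) (φ : OSF S Z) : Set (F.obj X) :=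
  PropForm.eval (fun a => S.lift a.1 X (fun i => τ (a.2 i))) φ

/-- Substitution of the arguments of modalities in a formula in `Prop(Λ(Z))`. -/
def OSF.map {F : Type u ⥤ Type u} (S : ModalSig F) {Z W : Type _} (f : Z → W) :
    OSF S Z → OSF S W :=
  PropForm.map (fun a => ⟨a.1, fun i => f (a.2 i)⟩)

/-- A Boolean subalgebra of `Set X`. -/
def IsBoolSubalg {X : Type u} (𝔄 : Set (Set X)) : Prop :=
  ∅ ∈ 𝔄 ∧ Set.univ ∈ 𝔄 ∧ (∀ A ∈ 𝔄, Aᶜ ∈ 𝔄) ∧ (∀ A ∈ 𝔄, ∀ B ∈ 𝔄, A ∪ B ∈ 𝔄) ∧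
    (∀ A ∈ 𝔄, ∀ B ∈ 𝔄, A ∩ B ∈ 𝔄)

/-- The atoms `S(𝔄)` of a (finite) Boolean subalgebra: its minimal nonempty elements. -/
def SAtoms {X : Type u} (𝔄 : Set (Set X)) : Set (Set X) :=
  {U | U ∈ 𝔄 ∧ U ≠ ∅ ∧ ∀ B ∈ 𝔄, B ≠ ∅ → B ⊆ U → B = U}

/-- The canonical isomorphism `can_𝔄`, sending `A` to the set of atoms contained in it. -/
def canOf {X : Type u} (𝔄 : Set (Set X)) (A : Set X) : Set ↥(SAtoms 𝔄) :=
  {U | (U : Set X) ⊆ A}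

lemma eval_preimage {Z : Type v} {X Y : Type u} (g : X → Y) (τ : Z → Set Y)
    (φ : PropForm Z) :
    PropForm.eval (fun z => g ⁻¹' τ z) φ = g ⁻¹' PropForm.eval τ φ := by
  induction φ with
  | bot => simp [PropForm.eval]
  | atom z => rfl
  | neg φ ih => simp [PropForm.eval, ih]
  | and φ ψ ih1 ih2 => simp [PropForm.eval, ih1, ih2]

/-- Restriction lemma: for finite Boolean subalgebras `𝔄₀ ⊆ 𝔄₁` with canonical projection
`f : S(𝔄₁) → S(𝔄₀)` (sending each atom of `𝔄₁` to the atom of `𝔄₀` containing it),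
`φ ∈ Prop(Λ(𝔄₀))`, and `t : F (S(𝔄₁))`: `t ∈ ⟦φ can_𝔄₁⟧` iff `F f t ∈ ⟦φ can_𝔄₀⟧`. -/
theorem can_restriction {F : Type u ⥤ Type u} (S : ModalSig F)
    (X : Type u) (𝔄₀ 𝔄₁ : Set (Set X))
    (h0 : IsBoolSubalg 𝔄₀) (h1 : IsBoolSubalg 𝔄₁)
    (hfin0 : 𝔄₀.Finite) (hfin1 : 𝔄₁.Finite) (hsub : 𝔄₀ ⊆ 𝔄₁)
    (f : ↥(SAtoms 𝔄₁) → ↥(SAtoms 𝔄₀))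
    (hf : ∀ U : ↥(SAtoms 𝔄₁), (U : Set X) ⊆ ((f U : Set X)))
    (φ : OSF S ↥𝔄₀) (t : F.obj ↥(SAtoms 𝔄₁)) :
    t ∈ OSF.ext S (id : Set ↥(SAtoms 𝔄₁) → Set ↥(SAtoms 𝔄₁))
        (OSF.map S (fun A : ↥𝔄₀ => canOf 𝔄₁ ↑A) φ) ↔
    F.map (TypeCat.ofHom f) t ∈ OSF.ext S (id : Set ↥(SAtoms 𝔄₀) → Set ↥(SAtoms 𝔄₀))
        (OSF.map S (fun A : ↥𝔄₀ => canOf 𝔄₀ ↑A) φ) := by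
  have key : ∀ A : ↥𝔄₀, canOf 𝔄₁ (A : Set X) = f ⁻¹' canOf 𝔄₀ (A : Set X) := by
    intro A
    ext U
    simp only [canOf, Set.mem_setOf_eq, Set.mem_preimage]
    constructor
    · intro hUA
      obtain ⟨hmem, hne, hmin⟩ := (f U).2
      have hUf := hf U
      have hUne : (U : Set X) ≠ ∅ := U.2.2.1
      have hcap : ((f U : Set X) ∩ (A : Set X)) ∈ 𝔄₀ := h0.2.2.2.2 _ hmem _ A.2
      have hcapne : ((f U : Set X) ∩ (A : Set X)) ≠ ∅ := by
        intro h
        apply hUne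
        rw [← Set.subset_empty_iff, ← h]
        exact Set.subset_inter hUf hUA
      have := hmin _ hcap hcapne Set.inter_subset_left
      rw [← this]
      exact Set.inter_subset_right
    · intro hfA
      exact (hf U).trans hfA
  have τeq : (fun z : ↥𝔄₀ => f ⁻¹' canOf 𝔄₀ (z : Set X)) =
      fun z : ↥𝔄₀ => canOf 𝔄₁ (z : Set X) := by
    funext z; exact (key z).symm
  have main : ∀ ψ : PropForm ((m : S.Λ) × (Fin (S.ar m) → ↥𝔄₀)),
      PropForm.eval (fun a : (m : S.Λ) × (Fin (S.ar m) → Set ↥(SAtoms 𝔄₁)) =>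
          S.lift a.1 _ fun i => id (a.2 i))
        (PropForm.map (fun a : (m : S.Λ) × (Fin (S.ar m) → ↥𝔄₀) =>
          (⟨a.1, fun i => canOf 𝔄₁ (a.2 i : Set X)⟩ : (m : S.Λ) × (Fin (S.ar m) → Set ↥(SAtoms 𝔄₁)))) ψ)
      = F.map (TypeCat.ofHom f) ⁻¹' PropForm.eval (fun a : (m : S.Λ) × (Fin (S.ar m) → Set ↥(SAtoms 𝔄₀)) =>
          S.lift a.1 _ fun i => id (a.2 i))
        (PropForm.map (fun a : (m : S.Λ) × (Fin (S.ar m) → ↥𝔄₀) =>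
          (⟨a.1, fun i => canOf 𝔄₀ (a.2 i : Set X)⟩ : (m : S.Λ) × (Fin (S.ar m) → Set ↥(SAtoms 𝔄₀)))) ψ) := by
    intro ψ
    induction ψ with
    | bot => simp [PropForm.map, PropForm.eval]
    | atom a =>
      show S.lift a.1 _ (fun i => id (canOf 𝔄₁ (a.2 i : Set X))) = _
      simp only [id]
      rw [show (fun i => canOf 𝔄₁ (a.2 i : Set X)) =
          fun i => f ⁻¹' canOf 𝔄₀ (a.2 i : Set X) from funext fun i => key (a.2 i)]
      exact S.natural a.1 _ _ f _
    | neg ψ ih =>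
      show (_ : Set _)ᶜ = _
      rw [ih]; rfl
    | and ψ₁ ψ₂ ih1 ih2 =>
      show (_ ∩ _ : Set _) = _
      rw [ih1, ih2]; rfl
  simp only [OSF.ext, OSF.map]
  rw [main φ]
  rfl
end

section
/- Let F, Λ, ar, ⟦·⟧ be a set functor with a finite modal signature interpreted by predicate liftings. If Λ is separating and F preserves finite surjective weak pullbacks, then the logic L(Λ) has uniform one-step interpolation. -/
open CategoryTheory

universe u v

/-- Interpolable pairs of Boolean subalgebras. -/
def Interpolable {X : Type u} (𝔄₁ 𝔄₂ : Set (Set X)) : Prop :=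
  ∀ A ∈ 𝔄₁, ∀ B ∈ 𝔄₂, A ⊆ B → ∃ C ∈ 𝔄₁ ∩ 𝔄₂, A ⊆ C ∧ C ⊆ B

/-- The logic `L(Λ)` has one-step interpolation: for interpolable finite Boolean
subalgebras `𝔄₁, 𝔄₂` and `φ ∈ Prop(Λ(𝔄₁))`, `ψ ∈ Prop(Λ(𝔄₂))` with `F X ⊨ φ → ψ`,
there is an interpolant `ρ ∈ Prop(Λ(𝔄₁ ∩ 𝔄₂))`. -/
def OneStepInterpolation {F : Type u ⥤ Type u} (S : ModalSig F) : Prop :=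
  ∀ (X : Type u) (𝔄₁ 𝔄₂ : Set (Set X)),
    IsBoolSubalg 𝔄₁ → IsBoolSubalg 𝔄₂ → 𝔄₁.Finite → 𝔄₂.Finite → Interpolable 𝔄₁ 𝔄₂ →
    ∀ (φ : OSF S ↥𝔄₁) (ψ : OSF S ↥𝔄₂),
      OSF.ext S (Subtype.val : ↥𝔄₁ → Set X) φ ⊆ OSF.ext S (Subtype.val : ↥𝔄₂ → Set X) ψ →
      ∃ ρ : OSF S ↥(𝔄₁ ∩ 𝔄₂),
        OSF.ext S (Subtype.val : ↥𝔄₁ → Set X) φ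
          ⊆ OSF.ext S (Subtype.val : ↥(𝔄₁ ∩ 𝔄₂) → Set X) ρ ∧
        OSF.ext S (Subtype.val : ↥(𝔄₁ ∩ 𝔄₂) → Set X) ρ
          ⊆ OSF.ext S (Subtype.val : ↥𝔄₂ → Set X) ψ

/-- The logic `L(Λ)` has uniform one-step interpolation: for finite Boolean subalgebras
`𝔄₀ ⊆ 𝔄₁` and `φ ∈ Prop(Λ(𝔄₁))` there is a single `ρ ∈ Prop(Λ(𝔄₀))` with `F X ⊨ φ → ρ`
interpolating for every `ψ` over an `𝔄₂` interpolable with `𝔄₁` with `𝔄₁ ∩ 𝔄₂ ⊆ 𝔄₀`. -/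
def UniformOneStepInterpolation {F : Type u ⥤ Type u} (S : ModalSig F) : Prop :=
  ∀ (X : Type u) (𝔄₀ 𝔄₁ : Set (Set X)),
    IsBoolSubalg 𝔄₀ → IsBoolSubalg 𝔄₁ → 𝔄₀.Finite → 𝔄₁.Finite → 𝔄₀ ⊆ 𝔄₁ →
    ∀ φ : OSF S ↥𝔄₁, ∃ ρ : OSF S ↥𝔄₀,
      OSF.ext S (Subtype.val : ↥𝔄₁ → Set X) φ
        ⊆ OSF.ext S (Subtype.val : ↥𝔄₀ → Set X) ρ ∧
      ∀ 𝔄₂ : Set (Set X), IsBoolSubalg 𝔄₂ → 𝔄₂.Finite → Interpolable 𝔄₁ 𝔄₂ →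
        𝔄₁ ∩ 𝔄₂ ⊆ 𝔄₀ →
        ∀ ψ : OSF S ↥𝔄₂,
          OSF.ext S (Subtype.val : ↥𝔄₁ → Set X) φ
            ⊆ OSF.ext S (Subtype.val : ↥𝔄₂ → Set X) ψ →
          OSF.ext S (Subtype.val : ↥𝔄₀ → Set X) ρ
            ⊆ OSF.ext S (Subtype.val : ↥𝔄₂ → Set X) ψ

/-- `Λ` is separating for `F`. -/
def Separating {F : Type u ⥤ Type u} (S : ModalSig F) : Prop :=
  ∀ X : Type u, Function.Injective
    (fun t : F.obj X => fun m : S.Λ => {A : Fin (S.ar m) → Set X | t ∈ S.lift m X A})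

/-- `F` preserves finite surjective weak pullbacks. -/
def PreservesFinSurjWeakPB (F : Type u ⥤ Type u) : Prop :=
  ∀ (X Y Z : Type u), Finite X → Finite Y → Finite Z →
    ∀ (f : X → Z) (g : Y → Z), Function.Surjective f → Function.Surjective g →
    ∀ (s : F.obj X) (t : F.obj Y), F.map (TypeCat.ofHom f) s = F.map (TypeCat.ofHom g) t →
      ∃ w : F.obj {p : X × Y // f p.1 = g p.2},
        F.map (TypeCat.ofHom (fun p : {p : X × Y // f p.1 = g p.2} => p.1.1)) w = s ∧
        F.map (TypeCat.ofHom (fun p : {p : X × Y // f p.1 = g p.2} => p.1.2)) w = t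


section InterpolationHelpers

open Function

universe w

/-! ### Propositional helpers -/

/-- Disjunction as a derived connective. -/
def PropForm.disj {Z : Type w} (p q : PropForm Z) : PropForm Z :=
  .neg (.and (.neg p) (.neg q))

lemma PropForm.mem_eval_disj {Z : Type w} {X : Type u} (τ : Z → Set X)
    (p q : PropForm Z) (t : X) :
    t ∈ PropForm.eval τ (PropForm.disj p q) ↔
      t ∈ PropForm.eval τ p ∨ t ∈ PropForm.eval τ q := by
  simp only [PropForm.disj, PropForm.eval, Set.mem_compl_iff, Set.mem_inter_iff]
  tauto

/-- Finite conjunction. -/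
def PropForm.bigConj {Z : Type w} : List (PropForm Z) → PropForm Z
  | [] => .neg .bot
  | p :: l => .and p (PropForm.bigConj l)

lemma PropForm.mem_bigConj {Z : Type w} {X : Type u} (τ : Z → Set X)
    (L : List (PropForm Z)) (t : X) :
    t ∈ PropForm.eval τ (PropForm.bigConj L) ↔ ∀ p ∈ L, t ∈ PropForm.eval τ p := by
  induction L with
  | nil => simp [PropForm.bigConj, PropForm.eval]
  | cons p l ih => simp [PropForm.bigConj, PropForm.eval, Set.mem_inter_iff, ih]

/-- Finite disjunction. -/
def PropForm.bigDisj {Z : Type w} : List (PropForm Z) → PropForm Z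
  | [] => .bot
  | p :: l => PropForm.disj p (PropForm.bigDisj l)

lemma PropForm.mem_bigDisj {Z : Type w} {X : Type u} (τ : Z → Set X)
    (L : List (PropForm Z)) (t : X) :
    t ∈ PropForm.eval τ (PropForm.bigDisj L) ↔ ∃ p ∈ L, t ∈ PropForm.eval τ p := by
  induction L with
  | nil => simp [PropForm.bigDisj, PropForm.eval]
  | cons p l ih => simp [PropForm.bigDisj, PropForm.mem_eval_disj, ih]

/-- The extension of a propositional formula only depends on the atomic memberships. -/
lemma PropForm.eval_congr {Z : Type w} {X : Type u} {τ : Z → Set X} {s t : X}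
    (h : ∀ z, (s ∈ τ z ↔ t ∈ τ z)) :
    ∀ θ : PropForm Z, (s ∈ PropForm.eval τ θ ↔ t ∈ PropForm.eval τ θ)
  | .bot => Iff.rfl
  | .atom z => h z
  | .neg θ => by
      simp only [PropForm.eval, Set.mem_compl_iff]
      exact not_congr (PropForm.eval_congr h θ)
  | .and θ₁ θ₂ => by
      simp only [PropForm.eval, Set.mem_inter_iff]
      exact and_congr (PropForm.eval_congr h θ₁) (PropForm.eval_congr h θ₂)

/-- A saturating formula: a formula whose extension is the closure of `E` under
agreement on all atoms. -/
lemma exists_saturating {Z : Type w} [Finite Z] {X : Type u} (v : Z → Set X) (E : Set X) :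
    ∃ ρ : PropForm Z, (E ⊆ PropForm.eval v ρ) ∧
      ∀ t ∈ PropForm.eval v ρ, ∃ s ∈ E, ∀ z, (t ∈ v z ↔ s ∈ v z) := by
  classical
  haveI : Fintype Z := Fintype.ofFinite Z
  set cell : (Z → Prop) → PropForm Z := fun c =>
    PropForm.bigConj ((Finset.univ : Finset Z).toList.map
      fun z => if c z then .atom z else .neg (.atom z)) with hcell
  have mem_cell : ∀ (c : Z → Prop) (t : X),
      t ∈ PropForm.eval v (cell c) ↔ ∀ z, (t ∈ v z ↔ c z) := by
    intro c t
    rw [hcell]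
    rw [PropForm.mem_bigConj]
    constructor
    · intro h z
      have hz := h _ (List.mem_map_of_mem (Finset.mem_toList.mpr (Finset.mem_univ z)))
      by_cases hc : c z
      · rw [if_pos hc] at hz
        exact ⟨fun _ => hc, fun _ => hz⟩
      · rw [if_neg hc] at hz
        exact ⟨fun ht => absurd ht hz, fun h' => absurd h' hc⟩
    · intro h p hp
      obtain ⟨z, _, rfl⟩ := List.mem_map.mp hp
      by_cases hc : c z
      · rw [if_pos hc]; exact (h z).mpr hc
      · rw [if_neg hc]; exact fun ht => hc ((h z).mp ht)
  haveI : Fintype (Z → Prop) := Fintype.ofFinite _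
  set cs : Finset (Z → Prop) :=
    Finset.univ.filter (fun c => ∃ s ∈ E, ∀ z, (s ∈ v z ↔ c z)) with hcs
  refine ⟨PropForm.bigDisj (cs.toList.map cell), ?_, ?_⟩
  · intro s hs
    rw [PropForm.mem_bigDisj]
    refine ⟨cell (fun z => s ∈ v z), List.mem_map_of_mem ?_,
      (mem_cell _ s).mpr fun z => Iff.rfl⟩
    rw [Finset.mem_toList, hcs, Finset.mem_filter]
    exact ⟨Finset.mem_univ _, s, hs, fun z => Iff.rfl⟩
  · intro t ht
    rw [PropForm.mem_bigDisj] at ht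
    obtain ⟨p, hp, htp⟩ := ht
    obtain ⟨c, hc, rfl⟩ := List.mem_map.mp hp
    rw [Finset.mem_toList, hcs, Finset.mem_filter] at hc
    obtain ⟨-, s, hs, hsc⟩ := hc
    refine ⟨s, hs, fun z => ?_⟩
    rw [(mem_cell c t).mp htp z, hsc z]

/-! ### Boolean subalgebra helpers -/

lemma IsBoolSubalg.inter {X : Type u} {𝔄₁ 𝔄₂ : Set (Set X)}
    (h1 : IsBoolSubalg 𝔄₁) (h2 : IsBoolSubalg 𝔄₂) : IsBoolSubalg (𝔄₁ ∩ 𝔄₂) :=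
  ⟨⟨h1.1, h2.1⟩, ⟨h1.2.1, h2.2.1⟩,
    fun A hA => ⟨h1.2.2.1 A hA.1, h2.2.2.1 A hA.2⟩,
    fun A hA B hB => ⟨h1.2.2.2.1 A hA.1 B hB.1, h2.2.2.2.1 A hA.2 B hB.2⟩,
    fun A hA B hB => ⟨h1.2.2.2.2 A hA.1 B hB.1, h2.2.2.2.2 A hA.2 B hB.2⟩⟩

lemma IsBoolSubalg.biInter_mem {X : Type u} {𝔄 : Set (Set X)} (h : IsBoolSubalg 𝔄)
    {ι : Type w} (s : Finset ι) (f : ι → Set X) (hf : ∀ i ∈ s, f i ∈ 𝔄) :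
    (⋂ i ∈ s, f i) ∈ 𝔄 := by
  classical
  induction s using Finset.induction_on with
  | empty => simpa using h.2.1
  | @insert a s ha ih =>
      rw [Finset.set_biInter_insert]
      exact h.2.2.2.2 _ (hf a (Finset.mem_insert_self a s)) _
        (ih fun i hi => hf i (Finset.mem_insert_of_mem hi))

lemma IsBoolSubalg.biUnion_mem {X : Type u} {𝔄 : Set (Set X)} (h : IsBoolSubalg 𝔄)
    {ι : Type w} (s : Finset ι) (f : ι → Set X) (hf : ∀ i ∈ s, f i ∈ 𝔄) :
    (⋃ i ∈ s, f i) ∈ 𝔄 := by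
  classical
  induction s using Finset.induction_on with
  | empty => simpa using h.1
  | @insert a s ha ih =>
      rw [Finset.set_biUnion_insert]
      exact h.2.2.2.1 _ (hf a (Finset.mem_insert_self a s)) _
        (ih fun i hi => hf i (Finset.mem_insert_of_mem hi))

/-! ### Quotient of `X` by a finite Boolean subalgebra -/

/-- Profile map of a family of sets. -/
def qmap {X : Type u} (𝔄 : Set (Set X)) (x : X) : ↥𝔄 → Prop := fun a => x ∈ (a : Set X)

/-- The "quotient" of `X` by the subalgebra `𝔄`, realized as the range of the profile map. -/
def QT {X : Type u} (𝔄 : Set (Set X)) : Type u := ↥(Set.range (qmap 𝔄))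

/-- The quotient map. -/
def qf {X : Type u} (𝔄 : Set (Set X)) (x : X) : QT 𝔄 := ⟨qmap 𝔄 x, ⟨x, rfl⟩⟩

lemma qf_surjective {X : Type u} (𝔄 : Set (Set X)) : Surjective (qf 𝔄) := by
  rintro ⟨p, x, rfl⟩
  exact ⟨x, rfl⟩

lemma QT.finite {X : Type u} {𝔄 : Set (Set X)} (h : 𝔄.Finite) : Finite (QT 𝔄) := by
  haveI := h.to_subtype
  exact inferInstanceAs (Finite ↥(Set.range (qmap 𝔄)))

lemma qf_eq_iff {X : Type u} {𝔄 : Set (Set X)} {x y : X} :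
    qf 𝔄 x = qf 𝔄 y ↔ ∀ a ∈ 𝔄, (x ∈ a ↔ y ∈ a) := by
  rw [show qf 𝔄 x = qf 𝔄 y ↔ (qf 𝔄 x).val = (qf 𝔄 y).val from Subtype.ext_iff]
  show qmap 𝔄 x = qmap 𝔄 y ↔ _
  rw [funext_iff]
  constructor
  · intro h a ha
    exact eq_iff_iff.mp (h ⟨a, ha⟩)
  · intro h a
    exact eq_iff_iff.mpr (h a a.2)

lemma preimage_singleton_mem {X : Type u} {𝔄 : Set (Set X)} (hB : IsBoolSubalg 𝔄)
    (hfin : 𝔄.Finite) (p : QT 𝔄) : qf 𝔄 ⁻¹' {p} ∈ 𝔄 := by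
  classical
  haveI := hfin.to_subtype
  haveI : Fintype ↥𝔄 := Fintype.ofFinite _
  have hrw : qf 𝔄 ⁻¹' {p} =
      ⋂ a ∈ (Finset.univ : Finset ↥𝔄), {x | x ∈ (a : Set X) ↔ p.val a} := by
    ext x
    simp only [Set.mem_preimage, Set.mem_singleton_iff, Set.mem_iInter, Finset.mem_univ,
      Set.mem_setOf_eq, forall_const]
    constructor
    · rintro rfl a
      exact Iff.rfl
    · intro h
      apply Subtype.ext
      funext a
      exact eq_iff_iff.mpr (h a)
  rw [hrw]
  apply hB.biInter_mem
  intro a _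
  by_cases hpa : p.val a
  · have : {x | x ∈ (a : Set X) ↔ p.val a} = (a : Set X) := by
      ext x; simp [hpa]
    rw [this]; exact a.2
  · have : {x | x ∈ (a : Set X) ↔ p.val a} = (a : Set X)ᶜ := by
      ext x; simp [hpa]
    rw [this]; exact hB.2.2.1 _ a.2

lemma preimage_mem {X : Type u} {𝔄 : Set (Set X)} (hB : IsBoolSubalg 𝔄)
    (hfin : 𝔄.Finite) (B : Set (QT 𝔄)) : qf 𝔄 ⁻¹' B ∈ 𝔄 := by
  classical
  haveI : Finite (QT 𝔄) := QT.finite hfin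
  haveI : Fintype (QT 𝔄) := Fintype.ofFinite _
  have hrw : qf 𝔄 ⁻¹' B = ⋃ p ∈ B.toFinset, qf 𝔄 ⁻¹' {p} := by
    ext x
    simp
  rw [hrw]
  exact hB.biUnion_mem _ _ fun p _ => preimage_singleton_mem hB hfin p

lemma exists_preimage {X : Type u} {𝔄 : Set (Set X)} {a : Set X} (ha : a ∈ 𝔄) :
    ∃ B : Set (QT 𝔄), a = qf 𝔄 ⁻¹' B :=
  ⟨{p | p.val ⟨a, ha⟩}, by ext x; exact Iff.rfl⟩

/-- Restriction map between quotients, for nested subalgebras. -/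
def restr {X : Type u} {𝔄' 𝔄 : Set (Set X)} (h : 𝔄' ⊆ 𝔄) : QT 𝔄 → QT 𝔄' :=
  fun p => ⟨fun a => p.val ⟨a.1, h a.2⟩, by
    obtain ⟨x, hx⟩ := p.2
    exact ⟨x, by funext a; rw [← hx]; rfl⟩⟩

lemma restr_qf {X : Type u} {𝔄' 𝔄 : Set (Set X)} (h : 𝔄' ⊆ 𝔄) (x : X) :
    restr h (qf 𝔄 x) = qf 𝔄' x := rfl

lemma restr_surjective {X : Type u} {𝔄' 𝔄 : Set (Set X)} (h : 𝔄' ⊆ 𝔄) :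
    Surjective (restr h) := by
  intro p'
  obtain ⟨x, hx⟩ := qf_surjective 𝔄' p'
  exact ⟨qf 𝔄 x, by rw [restr_qf]; exact hx⟩

/-- `F` preserves surjectivity (surjections split in `Type`). -/
lemma map_surjective (F : Type u ⥤ Type u) {X Y : Type u} {f : X → Y}
    (hf : Surjective f) : Surjective (F.map (TypeCat.ofHom f)) := by
  obtain ⟨g, hg⟩ := hf.hasRightInverse
  intro t
  refine ⟨F.map (TypeCat.ofHom g) t, ?_⟩
  rw [← FunctorToTypes.map_comp_apply]
  have : (TypeCat.ofHom g ≫ TypeCat.ofHom f : Y ⟶ Y) = 𝟙 Y := by ext y; exact hg y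
  rw [this, FunctorToTypes.map_id_apply]

/-- Membership in liftings at `𝔄`-arguments is determined by the image under the quotient map. -/
lemma lift_factor {F : Type u ⥤ Type u} (S : ModalSig F) {X : Type u} (𝔄 : Set (Set X))
    {s t : F.obj X} (h : F.map (TypeCat.ofHom (qf 𝔄)) s = F.map (TypeCat.ofHom (qf 𝔄)) t)
    (m : S.Λ) (A : Fin (S.ar m) → ↥𝔄) :
    s ∈ S.lift m X (fun i => (A i : Set X)) ↔ t ∈ S.lift m X (fun i => (A i : Set X)) := by
  choose B hB using fun i => exists_preimage (𝔄 := 𝔄) (A i).2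
  have hrw : (fun i => ((A i : Set X))) = fun i => qf 𝔄 ⁻¹' (B i) := funext hB
  rw [hrw, S.natural]
  simp only [Set.mem_preimage]
  rw [h]

/-- Separation: agreement on all liftings at `𝔄`-arguments forces equal quotient images. -/
lemma map_qf_eq {F : Type u ⥤ Type u} (S : ModalSig F) (hsep : Separating S)
    {X : Type u} {𝔄 : Set (Set X)} (hB : IsBoolSubalg 𝔄) (hfin : 𝔄.Finite)
    {s t : F.obj X}
    (h : ∀ (m : S.Λ) (A : Fin (S.ar m) → ↥𝔄),
      (s ∈ S.lift m X (fun i => (A i : Set X)) ↔ t ∈ S.lift m X (fun i => (A i : Set X)))) :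
    F.map (TypeCat.ofHom (qf 𝔄)) s = F.map (TypeCat.ofHom (qf 𝔄)) t := by
  apply hsep (QT 𝔄)
  funext m
  ext A
  simp only [Set.mem_setOf_eq]
  have h1 : ∀ u : F.obj X,
      (F.map (TypeCat.ofHom (qf 𝔄)) u ∈ S.lift m (QT 𝔄) A ↔ u ∈ S.lift m X (fun i => qf 𝔄 ⁻¹' A i)) := by
    intro u
    rw [S.natural]
    exact Iff.rfl
  rw [h1 s, h1 t]
  exact h m (fun i => ⟨qf 𝔄 ⁻¹' A i, preimage_mem hB hfin _⟩)

/-- Interpolability lifts points of the pullback of quotients. -/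
lemma interp_lift {X : Type u} {𝔄₁ 𝔄₂ : Set (Set X)}
    (h1 : IsBoolSubalg 𝔄₁) (h2 : IsBoolSubalg 𝔄₂) (hf1 : 𝔄₁.Finite) (hf2 : 𝔄₂.Finite)
    (hint : Interpolable 𝔄₁ 𝔄₂) {x y : X}
    (h : qf (𝔄₁ ∩ 𝔄₂) x = qf (𝔄₁ ∩ 𝔄₂) y) :
    ∃ z, qf 𝔄₁ z = qf 𝔄₁ x ∧ qf 𝔄₂ z = qf 𝔄₂ y := by
  by_contra hc
  push_neg at hc
  have hC1 : qf 𝔄₁ ⁻¹' {qf 𝔄₁ x} ∈ 𝔄₁ := preimage_mem h1 hf1 _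
  have hC2 : qf 𝔄₂ ⁻¹' {qf 𝔄₂ y} ∈ 𝔄₂ := preimage_mem h2 hf2 _
  have hsub : qf 𝔄₁ ⁻¹' {qf 𝔄₁ x} ⊆ (qf 𝔄₂ ⁻¹' {qf 𝔄₂ y})ᶜ := by
    intro z hz hz2
    exact hc z hz hz2
  obtain ⟨C, hC, hxC, hCy⟩ := hint _ hC1 _ (h2.2.2.1 _ hC2) hsub
  have hxC' : x ∈ C := hxC rfl
  have hyC : y ∈ C := (qf_eq_iff.mp h C hC).mp hxC'
  exact hCy hyC rfl

end InterpolationHelpers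

/-- If `Λ` is separating and `F` preserves finite surjective weak pullbacks, then `L(Λ)`
has uniform one-step interpolation. -/
theorem preservation_implies_uniform_one_step_interpolation
    {F : Type u ⥤ Type u} (S : ModalSig F)
    (hsep : Separating S) (hpb : PreservesFinSurjWeakPB F) :
    UniformOneStepInterpolation S := by
  classical
  intro X 𝔄₀ 𝔄₁ hB0 hB1 hf0 hf1 hsub φ
  haveI : Finite S.Λ := S.finite
  haveI : Finite ↥𝔄₀ := hf0.to_subtype
  obtain ⟨ρ, hρ1, hρ2⟩ := exists_saturating
    (Z := (m : S.Λ) × (Fin (S.ar m) → ↥𝔄₀))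
    (fun a => S.lift a.1 X (fun i => ((a.2 i : Set X))))
    (OSF.ext S (Subtype.val : ↥𝔄₁ → Set X) φ)
  refine ⟨ρ, hρ1, ?_⟩
  intro 𝔄₂ hB2 hf2 hint h12 ψ hφψ t ht
  obtain ⟨s, hs, hprof⟩ := hρ2 t ht
  set 𝔄' := 𝔄₁ ∩ 𝔄₂ with h𝔄'
  have hB' : IsBoolSubalg 𝔄' := hB1.inter hB2
  have hf' : 𝔄'.Finite := hf1.inter_of_left 𝔄₂
  -- Step 1: `s` and `t` have equal images in the quotient by `𝔄' = 𝔄₁ ∩ 𝔄₂`.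
  have hq' : F.map (TypeCat.ofHom (qf 𝔄')) t = F.map (TypeCat.ofHom (qf 𝔄')) s := by
    apply map_qf_eq S hsep hB' hf'
    intro m A'
    exact hprof ⟨m, fun i => ⟨(A' i).1, h12 (A' i).2⟩⟩
  -- Step 2: weak pullback preservation over the finite quotients.
  haveI hfin1 : Finite (QT 𝔄₁) := QT.finite hf1
  haveI hfin2 : Finite (QT 𝔄₂) := QT.finite hf2
  haveI hfin' : Finite (QT 𝔄') := QT.finite hf'
  set f : QT 𝔄₁ → QT 𝔄' := restr Set.inter_subset_left with hfdef
  set g : QT 𝔄₂ → QT 𝔄' := restr Set.inter_subset_right with hgdef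
  have hcomp1 : ∀ u : F.obj X, F.map (TypeCat.ofHom f) (F.map (TypeCat.ofHom (qf 𝔄₁)) u) = F.map (TypeCat.ofHom (qf 𝔄')) u := by
    intro u
    rw [← FunctorToTypes.map_comp_apply]
    congr 1
  have hcomp2 : ∀ u : F.obj X, F.map (TypeCat.ofHom g) (F.map (TypeCat.ofHom (qf 𝔄₂)) u) = F.map (TypeCat.ofHom (qf 𝔄')) u := by
    intro u
    rw [← FunctorToTypes.map_comp_apply]
    congr 1
  have hcomm : F.map (TypeCat.ofHom f) (F.map (TypeCat.ofHom (qf 𝔄₁)) s) = F.map (TypeCat.ofHom g) (F.map (TypeCat.ofHom (qf 𝔄₂)) t) := by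
    rw [hcomp1, hcomp2, hq']
  -- Step 3: `X` covers the pullback, by interpolability.
  set P := {p : QT 𝔄₁ × QT 𝔄₂ // f p.1 = g p.2} with hP
  set e : X → P := fun x => ⟨(qf 𝔄₁ x, qf 𝔄₂ x), by
    show f (qf 𝔄₁ x) = g (qf 𝔄₂ x)
    rw [hfdef, hgdef, restr_qf, restr_qf]⟩ with hedef
  have he : Function.Surjective e := by
    rintro ⟨⟨p1, p2⟩, hp⟩
    obtain ⟨x, rfl⟩ := qf_surjective 𝔄₁ p1
    obtain ⟨y, rfl⟩ := qf_surjective 𝔄₂ p2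
    have hp' : qf 𝔄' x = qf 𝔄' y := by
      rw [hfdef, hgdef] at hp
      rw [restr_qf, restr_qf] at hp
      exact hp
    obtain ⟨z, hz1, hz2⟩ := interp_lift hB1 hB2 hf1 hf2 hint hp'
    refine ⟨z, Subtype.ext (Prod.ext ?_ ?_)⟩
    · exact hz1
    · exact hz2
  obtain ⟨w, hw1, hw2⟩ := hpb (QT 𝔄₁) (QT 𝔄₂) (QT 𝔄') hfin1 hfin2 hfin' f g
    (restr_surjective _) (restr_surjective _) (F.map (TypeCat.ofHom (qf 𝔄₁)) s) (F.map (TypeCat.ofHom (qf 𝔄₂)) t) hcomm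
  obtain ⟨r, hr⟩ := map_surjective F he w
  have hproj1 : ∀ u : F.obj X,
      F.map (TypeCat.ofHom (fun p : P => p.1.1)) (F.map (TypeCat.ofHom e) u) = F.map (TypeCat.ofHom (qf 𝔄₁)) u := by
    intro u
    rw [← FunctorToTypes.map_comp_apply]
    congr 1
  have hproj2 : ∀ u : F.obj X,
      F.map (TypeCat.ofHom (fun p : P => p.1.2)) (F.map (TypeCat.ofHom e) u) = F.map (TypeCat.ofHom (qf 𝔄₂)) u := by
    intro u
    rw [← FunctorToTypes.map_comp_apply]
    congr 1
  have hr1 : F.map (TypeCat.ofHom (qf 𝔄₁)) r = F.map (TypeCat.ofHom (qf 𝔄₁)) s := by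
    rw [← hproj1 r, hr]
    exact hw1
  have hr2 : F.map (TypeCat.ofHom (qf 𝔄₂)) r = F.map (TypeCat.ofHom (qf 𝔄₂)) t := by
    rw [← hproj2 r, hr]
    exact hw2
  -- Step 4: transfer along the quotient maps.
  have hrφ : r ∈ OSF.ext S (Subtype.val : ↥𝔄₁ → Set X) φ :=
    (PropForm.eval_congr
      (τ := fun a : (m : S.Λ) × (Fin (S.ar m) → ↥𝔄₁) => S.lift a.1 X fun i => ((a.2 i : Set X)))
      (fun z => lift_factor S 𝔄₁ hr1 z.1 z.2) φ).mpr hs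
  have hrψ : r ∈ OSF.ext S (Subtype.val : ↥𝔄₂ → Set X) ψ := hφψ hrφ
  exact (PropForm.eval_congr
    (τ := fun a : (m : S.Λ) × (Fin (S.ar m) → ↥𝔄₂) => S.lift a.1 X fun i => ((a.2 i : Set X)))
    (fun z => lift_factor S 𝔄₂ hr2 z.1 z.2) ψ).mp hrψ
end
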